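/- There is no injective Lie algebra homomorphism from g− into n. (Indeed, since n is 2-step nilpotent every iterated triple bracket in the image of a homomorphism vanishes, whereas [[e₁′, e₂′], e₁′] = 6e₁ ≠ 0 in g−, so every Lie algebra homomorphism g− → n has nontrivial kernel.) -/
import Mathlib


noncomputable section

open Module TensorProduct

/-- The bracket of the (2,3,5) symbol algebra `g₋ = ℝ⁵`, in the basis
`e₁, e₂, e₀, e₁′, e₂′` (coordinates `0,…,4`), determined by
`[e₁′,e₂′] = 2e₀`, `[e₀,e₁′] = 3e₁`, `[e₀,e₂′] = 3e₂`, all other brackets zero. -/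
def gBr (x y : Fin 5 → ℝ) : Fin 5 → ℝ :=
  ![3 * (x 2 * y 3 - x 3 * y 2), 3 * (x 2 * y 4 - x 4 * y 2),
    2 * (x 3 * y 4 - x 4 * y 3), 0, 0]

/-- The symmetric tensors `Sym²U′` inside `U′ ⊗ U′`. -/
def sym2sub (U' : Type*) [AddCommGroup U'] [Module ℝ U'] :
    Submodule ℝ (TensorProduct ℝ U' U') :=
  LinearMap.ker ((TensorProduct.comm ℝ U' U').toLinearMap - LinearMap.id)

/-- The bracket on `n = n₋₂ ⊕ n₋₁ = Sym²U′ ⊕ (U′ ⊗ Q)` (realized inside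
`(U′ ⊗ U′) × (U′ ⊗ Q)`): `n₋₂` is central and the bracket of two `n₋₁`-elements is `b`. -/
def nbr {U' Q : Type*} [AddCommGroup U'] [Module ℝ U'] [AddCommGroup Q] [Module ℝ Q]
    (b : TensorProduct ℝ U' Q →ₗ[ℝ] TensorProduct ℝ U' Q →ₗ[ℝ] TensorProduct ℝ U' U')
    (p q : TensorProduct ℝ U' U' × TensorProduct ℝ U' Q) :
    TensorProduct ℝ U' U' × TensorProduct ℝ U' Q :=
  (b p.2 q.2, 0)

/-- There is no injective Lie algebra homomorphism from `g₋` into `n`. -/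
theorem no_injective_hom_g235_to_n47
    (U' Q : Type*) [AddCommGroup U'] [Module ℝ U'] [AddCommGroup Q] [Module ℝ Q]
    (hU : finrank ℝ U' = 2) (hQ : finrank ℝ Q = 2)
    (α : Q →ₗ[ℝ] Q →ₗ[ℝ] ℝ)
    (halt : ∀ q, α q q = 0)
    (hnd : ∀ q, (∀ q', α q q' = 0) → q = 0)
    (b : TensorProduct ℝ U' Q →ₗ[ℝ] TensorProduct ℝ U' Q →ₗ[ℝ] TensorProduct ℝ U' U')
    (hb : ∀ (u u' : U') (qq qq' : Q),
      b (u ⊗ₜ[ℝ] qq) (u' ⊗ₜ[ℝ] qq') = α qq qq' • (u ⊗ₜ[ℝ] u' + u' ⊗ₜ[ℝ] u))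
    (f : (Fin 5 → ℝ) →ₗ[ℝ] TensorProduct ℝ U' U' × TensorProduct ℝ U' Q)
    -- f takes values in n = Sym²U′ ⊕ (U′ ⊗ Q)
    (hrange : ∀ v, (f v).1 ∈ sym2sub U')
    -- f is a Lie algebra homomorphism
    (hhom : ∀ x y, f (gBr x y) = nbr b (f x) (f y)) :
    ¬ Function.Injective f := by
  intro hinj
  have h1 : f (gBr (gBr ![0,0,0,1,0] ![0,0,0,0,1]) ![0,0,0,1,0]) = 0 := by
    rw [hhom, hhom]
    simp [nbr]
  have h2 : gBr (gBr ![0,0,0,1,0] ![0,0,0,0,1]) ![0,0,0,1,0] = ![6,0,0,0,0] := by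
    funext i
    fin_cases i <;> simp [gBr] <;> norm_num
  rw [h2] at h1
  have h0 : f 0 = 0 := map_zero f
  have := hinj (h1.trans h0.symm)
  have := congrFun this 0
  simp at this
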